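/- The alternating one-dimensional Mean Field Theory identity: for Δ > 0 and 0 < z < 1, ∑_{ℓ=0}^∞ (−1)^ℓ [(Δ)_ℓ² / (ℓ! (ℓ+2Δ−1)_ℓ)] · k_{2Δ+2ℓ}(z) = z^Δ. -/

import Mathlib

open Polynomial

/-- Gauss hypergeometric function `₂F₁(a,b;c;z)` as a power series sum. -/
noncomputable def hyp2F1 (a b c z : ℝ) : ℝ :=
  ∑' n : ℕ, ((ascPochhammer ℝ n).eval a * (ascPochhammer ℝ n).eval b /
    (ascPochhammer ℝ n).eval c) * z ^ n / n.factorial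

/-- The SL(2,ℝ) conformal block `k_{2h}(z) = z^h ₂F₁(h,h;2h;z)`. -/
noncomputable def sl2Block (h z : ℝ) : ℝ := z ^ h * hyp2F1 h h (2 * h) z

/-!
Expanding every block `k_{2Δ+2ℓ}(z) = z^{Δ+ℓ} ₂F₁(Δ+ℓ, Δ+ℓ; 2Δ+2ℓ; z)` turns the left-hand side
into a double series over `(ℓ, n)`. Since `(Δ)_ℓ (Δ+ℓ)_n = (Δ)_{ℓ+n}`, the coefficient of
`z^{Δ+m}` is `(Δ)_m²` times an alternating sum over `ℓ + n = m` of rational functions of `2Δ`,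
and by a partial-fraction identity that sum telescopes to `0` for `m > 0`. Pochhammer lower bounds
dominate the `m`-th antidiagonal by `poly(m) (Δ)_m² (4z)^m / (2m)!`, so the double series converges
absolutely and may equally be summed block by block.
-/

open Finset Filter
open scoped Nat

section Pochhammer

variable {S : Type*}

theorem ascPochhammer_eval_add [CommSemiring S] (a b : ℕ) (y : S) :
    (ascPochhammer S (a + b)).eval y =
      (ascPochhammer S a).eval y * (ascPochhammer S b).eval (y + a) := by
  rw [← ascPochhammer_mul, eval_mul, eval_comp, eval_add, eval_X, eval_natCast]

theorem ascPochhammer_succ_eval_left [CommSemiring S] (n : ℕ) (y : S) :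
    (ascPochhammer S (n + 1)).eval y = y * (ascPochhammer S n).eval (y + 1) := by
  rw [add_comm, ascPochhammer_eval_add, ascPochhammer_one, eval_X, Nat.cast_one]

variable [Semiring S] [PartialOrder S] [IsOrderedRing S]

theorem ascPochhammer_eval_nonneg (n : ℕ) {s : S} (hs : 0 ≤ s) :
    0 ≤ (ascPochhammer S n).eval s := by
  induction n with
  | zero => simp
  | succ n ih => rw [ascPochhammer_succ_eval]; exact mul_nonneg ih (by positivity)

theorem ascPochhammer_eval_le_eval (n : ℕ) {a b : S} (ha : 0 ≤ a) (hab : a ≤ b) :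
    (ascPochhammer S n).eval a ≤ (ascPochhammer S n).eval b := by
  induction n with
  | zero => simp
  | succ n ih =>
    simp only [ascPochhammer_succ_eval]
    exact mul_le_mul ih (by gcongr) (by positivity) (ascPochhammer_eval_nonneg n (ha.trans hab))

end Pochhammer

theorem min_mul_factorial_le_ascPochhammer_eval {y : ℝ} (hy : 0 < y) (j n : ℕ) :
    min y 1 * (j + n)! ≤ (j + n + 1) * j ! * (ascPochhammer ℝ n).eval (y + j) := by
  have hc0 : 0 ≤ min y 1 := le_min hy.le zero_le_one
  have hc1 : min y 1 ≤ 1 := min_le_right _ _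
  cases n with
  | zero =>
    simp only [add_zero, ascPochhammer_zero, eval_one, mul_one]
    gcongr
    linarith [(Nat.cast_nonneg j : (0 : ℝ) ≤ j)]
  | succ k =>
    have hfirst : min y 1 * (j + 1) ≤ y + j := by
      nlinarith [min_le_left y 1, (Nat.cast_nonneg j : (0 : ℝ) ≤ j)]
    have hrest : ((j + k)! : ℝ) ≤ j ! * (ascPochhammer ℝ k).eval (y + j + 1) := by
      rw [← factorial_mul_ascPochhammer]
      gcongr
      exact ascPochhammer_eval_le_eval k (by positivity) (by linarith)
    rw [ascPochhammer_succ_eval_left, ← add_assoc, Nat.factorial_succ]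
    push_cast
    calc min y 1 * ((j + k + 1) * (j + k)!)
        = min y 1 * (j + k + 1) * (j + k)! := by ring
      _ ≤ (j + k + 1 + 1) * (min y 1 * (j + 1)) * (j + k)! := by
          refine mul_le_mul_of_nonneg_right ?_ (by positivity)
          have : (0 : ℝ) ≤ min y 1 * ((j + k + 2) * j) := by positivity
          linarith
      _ ≤ (j + k + 1 + 1) * (y + j) * (j ! * (ascPochhammer ℝ k).eval (y + j + 1)) := by
          gcongr
      _ = _ := by ring

theorem sum_antidiagonal_one_div_factorial_le (m : ℕ) :
    ∑ p ∈ antidiagonal m, (1 : ℝ) / (p.2 ! * (2 * p.1 + p.2)!) ≤ 4 ^ m / (2 * m)! := by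
  have hterm : ∀ p ∈ antidiagonal m,
      (1 : ℝ) / (p.2 ! * (2 * p.1 + p.2)!) = (2 * m).choose p.2 / (2 * m)! := by
    rintro ⟨ℓ, n⟩ h
    rw [HasAntidiagonal.mem_antidiagonal] at h
    subst h
    have h := Nat.add_choose_mul_factorial_mul_factorial (2 * ℓ + n) n
    rw [show 2 * ℓ + n + n = 2 * (ℓ + n) by ring] at h
    rw [div_eq_div_iff (by positivity) (by positivity), ← h]
    push_cast
    ring
  have hchoose : ∑ p ∈ antidiagonal m, (2 * m).choose p.2 ≤ 4 ^ m := by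
    rw [← Nat.sum_antidiagonal_swap]
    simp only [Prod.snd_swap]
    rw [Nat.sum_antidiagonal_eq_sum_range_succ_mk]
    calc ∑ k ∈ range (m + 1), (2 * m).choose k
        ≤ ∑ k ∈ range (2 * m + 1), (2 * m).choose k :=
          sum_le_sum_of_subset (range_subset_range.2 (by omega))
      _ = 4 ^ m := by rw [Nat.sum_range_choose, pow_mul]; norm_num
  rw [sum_congr rfl hterm, ← sum_div]
  gcongr
  exact_mod_cast hchoose

section BlockCoeff

variable {x : ℝ}

/-- With `x = 2Δ`, the `ℓ`-th block contributes `(Δ)_{ℓ+n}² blockCoeff (2Δ) ℓ n` to the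
coefficient of `z^{Δ+ℓ+n}`. -/
noncomputable def blockCoeff (x : ℝ) (ℓ n : ℕ) : ℝ :=
  (-1) ^ ℓ / (ℓ ! * n ! * (ascPochhammer ℝ ℓ).eval (x + ℓ - 1) *
    (ascPochhammer ℝ n).eval (x + 2 * ℓ))

noncomputable def blockCoeffPrimitive (x : ℝ) (M ℓ : ℕ) : ℝ :=
  (-1) ^ ℓ * M.choose ℓ / ((M + 1)! * (ascPochhammer ℝ (M + 1)).eval (x + ℓ))

theorem blockCoeff_succ (hx : 0 < x) (ℓ n : ℕ) :
    blockCoeff x (ℓ + 1) n =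
      blockCoeffPrimitive x (ℓ + n) (ℓ + 1) - blockCoeffPrimitive x (ℓ + n) ℓ := by
  -- Each Pochhammer value is rewritten as `(y)_{ℓ+n+2}` over its complementary factors; the
  -- claim then becomes an identity between rational functions of `y`.
  set y := x + ℓ with hy
  have hy0 : 0 < y := by positivity
  have hA := ascPochhammer_pos (ℓ + 1) y hy0
  have hB : (ascPochhammer ℝ n).eval (y + ℓ + 2) =
      (ascPochhammer ℝ (ℓ + n + 2)).eval y /
        ((ascPochhammer ℝ (ℓ + 1)).eval y * (y + ℓ + 1)) := by
    rw [eq_div_iff (by positivity), show ℓ + n + 2 = (ℓ + 1) + (n + 1) by ring,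
      ascPochhammer_eval_add (ℓ + 1), ascPochhammer_succ_eval_left n]
    push_cast
    ring_nf
  have hE₁ : (ascPochhammer ℝ (ℓ + n + 1)).eval (y + 1) =
      (ascPochhammer ℝ (ℓ + n + 2)).eval y / y := by
    rw [eq_div_iff hy0.ne', mul_comm]
    exact (ascPochhammer_succ_eval_left (ℓ + n + 1) y).symm
  have hE₀ : (ascPochhammer ℝ (ℓ + n + 1)).eval y =
      (ascPochhammer ℝ (ℓ + n + 2)).eval y / (y + ℓ + n + 1) := by
    rw [eq_div_iff (by positivity), ascPochhammer_succ_eval (ℓ + n + 1)]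
    push_cast
    ring
  have hchoose : ((ℓ + n).choose (ℓ + 1) : ℝ) = (ℓ + n).choose ℓ * n / (ℓ + 1) := by
    rw [eq_div_iff (by positivity)]
    have := Nat.choose_succ_right_eq (ℓ + n) ℓ
    rw [Nat.add_sub_cancel_left] at this
    exact_mod_cast this
  have hfact : ((ℓ + n).choose ℓ : ℝ) * ℓ ! * n ! = (ℓ + n)! := by
    have := Nat.choose_mul_factorial_mul_factorial (Nat.le_add_right ℓ n)
    rw [Nat.add_sub_cancel_left] at this
    exact_mod_cast this
  have hC : (0 : ℝ) < (ℓ + n).choose ℓ := mod_cast Nat.choose_pos (Nat.le_add_right ℓ n)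
  have e₁ : x + ((ℓ + 1 : ℕ) : ℝ) - 1 = y := by push_cast; ring
  have e₂ : x + 2 * ((ℓ + 1 : ℕ) : ℝ) = y + ℓ + 2 := by push_cast; ring
  have e₃ : x + ((ℓ + 1 : ℕ) : ℝ) = y + 1 := by push_cast; ring
  unfold blockCoeff blockCoeffPrimitive
  rw [e₁, e₂, e₃, ← hy, hB, hE₁, hE₀, hchoose, Nat.factorial_succ (ℓ + n), Nat.factorial_succ ℓ]
  push_cast
  rw [← hfact]
  field_simp
  ring

theorem sum_antidiagonal_blockCoeff (hx : 0 < x) (m : ℕ) :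
    ∑ p ∈ antidiagonal m, blockCoeff x p.1 p.2 = if m = 0 then 1 else 0 := by
  cases m with
  | zero => simp [blockCoeff]
  | succ M =>
    have hstep : ∀ p ∈ antidiagonal M, blockCoeff x (p.1 + 1) p.2 =
        blockCoeffPrimitive x M (p.1 + 1) - blockCoeffPrimitive x M p.1 := by
      rintro ⟨ℓ, n⟩ h
      rw [HasAntidiagonal.mem_antidiagonal] at h
      subst h
      exact blockCoeff_succ hx ℓ n
    rw [Nat.sum_antidiagonal_succ, sum_congr rfl hstep,
      Nat.sum_antidiagonal_eq_sum_range_succ_mk, sum_range_sub, if_neg M.succ_ne_zero]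
    simp [blockCoeff, blockCoeffPrimitive]

theorem min_mul_factorial_two_mul_le_ascPochhammer_eval (hx : 0 < x) (ℓ : ℕ) :
    min x 1 * (2 * ℓ)! ≤ 4 * (ℓ + 1) * ℓ ! * (ascPochhammer ℝ ℓ).eval (x + ℓ - 1) := by
  cases ℓ with
  | zero => simp
  | succ j =>
    have h := min_mul_factorial_le_ascPochhammer_eval hx j (j + 1)
    rw [show j + (j + 1) = 2 * j + 1 by ring] at h
    rw [show 2 * (j + 1) = 2 * j + 1 + 1 by ring, Nat.factorial_succ, Nat.factorial_succ j,
      show x + ((j + 1 : ℕ) : ℝ) - 1 = x + j by push_cast; ring]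
    push_cast at h ⊢
    have hE := ascPochhammer_pos (j + 1) (x + j) (by positivity)
    calc min x 1 * ((2 * j + 1 + 1) * (2 * j + 1)!)
        = (2 * j + 2) * (min x 1 * (2 * j + 1)!) := by ring
      _ ≤ (2 * j + 2) * ((j + (j + 1) + 1) * j ! * (ascPochhammer ℝ (j + 1)).eval (x + j)) := by
          gcongr
      _ ≤ 4 * (j + 1 + 1) * ((j + 1) * j !) * (ascPochhammer ℝ (j + 1)).eval (x + j) := by
          have : (0 : ℝ) ≤ 4 * (j + 1) * j ! * (ascPochhammer ℝ (j + 1)).eval (x + j) := by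
            positivity
          linarith

theorem abs_blockCoeff_le (hx : 0 < x) (ℓ n : ℕ) :
    |blockCoeff x ℓ n| ≤
      4 * (ℓ + 1) * (2 * ℓ + n + 1) / (min x 1 ^ 2 * n ! * (2 * ℓ + n)!) := by
  have hℓ := min_mul_factorial_two_mul_le_ascPochhammer_eval hx ℓ
  have hn := min_mul_factorial_le_ascPochhammer_eval hx (2 * ℓ) n
  push_cast at hn
  have hE₁ : 0 < (ascPochhammer ℝ ℓ).eval (x + ℓ - 1) :=
    pos_of_mul_pos_right ((by positivity : (0 : ℝ) < min x 1 * (2 * ℓ)!).trans_le hℓ)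
      (by positivity)
  have hE₂ : 0 < (ascPochhammer ℝ n).eval (x + 2 * ℓ) := ascPochhammer_pos n _ (by positivity)
  rw [blockCoeff, abs_div, abs_pow, abs_neg, abs_one, one_pow, abs_of_pos (by positivity),
    div_le_div_iff₀ (by positivity) (by positivity), one_mul]
  have h2ℓ : (0 : ℝ) < (2 * ℓ)! := by positivity
  refine le_of_mul_le_mul_left ?_ h2ℓ
  calc ((2 * ℓ)! : ℝ) * (min x 1 ^ 2 * n ! * (2 * ℓ + n)!)
      = n ! * ((min x 1 * (2 * ℓ)!) * (min x 1 * (2 * ℓ + n)!)) := by ring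
    _ ≤ n ! * ((4 * (ℓ + 1) * ℓ ! * (ascPochhammer ℝ ℓ).eval (x + ℓ - 1)) *
          ((2 * ℓ + n + 1) * (2 * ℓ)! * (ascPochhammer ℝ n).eval (x + 2 * ℓ))) := by
        gcongr
    _ = _ := by ring

theorem sum_antidiagonal_abs_blockCoeff_le (hx : 0 < x) (m : ℕ) :
    ∑ p ∈ antidiagonal m, |blockCoeff x p.1 p.2| ≤
      4 * (m + 1) * (2 * m + 1) / min x 1 ^ 2 * (4 ^ m / (2 * m)!) := by
  calc ∑ p ∈ antidiagonal m, |blockCoeff x p.1 p.2|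
      ≤ ∑ p ∈ antidiagonal m, 4 * (m + 1) * (2 * m + 1) / min x 1 ^ 2 *
          (1 / (p.2 ! * (2 * p.1 + p.2)!)) := by
        refine sum_le_sum fun p hp => (abs_blockCoeff_le hx p.1 p.2).trans ?_
        rw [HasAntidiagonal.mem_antidiagonal] at hp
        rw [← hp, mul_one_div, div_div, mul_assoc (min x 1 ^ 2)]
        push_cast
        gcongr ?_ / _
        gcongr <;> linarith
    _ ≤ _ := by
        rw [← mul_sum]
        gcongr
        exact sum_antidiagonal_one_div_factorial_le m

end BlockCoeff

theorem summable_ascPochhammer_sq_mul_four_pow_div_factorial {a z : ℝ} (ha : 0 < a)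
    (hz0 : 0 < z) (hz1 : z < 1) :
    Summable fun m : ℕ =>
      (m + 1) * (2 * m + 1) * (ascPochhammer ℝ m).eval a ^ 2 * 4 ^ m / (2 * m)! * z ^ m := by
  set g := fun m : ℕ =>
    (m + 1) * (2 * m + 1) * (ascPochhammer ℝ m).eval a ^ 2 * 4 ^ m / (2 * m)! * z ^ m
  have hg : ∀ m, 0 < g m := fun m => by
    have := ascPochhammer_pos m a ha
    positivity
  have hratio : ∀ m : ℕ, ‖g (m + 1)‖ / ‖g m‖ = z * ((2 + 1 * m) / (1 + 1 * m) *
      ((3 + 2 * m) / (1 + 2 * m)) * ((a + 1 * m) / (1 + 2 * m)) *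
      ((4 * a + 4 * m) / (2 + 2 * m))) := by
    intro m
    have := ascPochhammer_pos m a ha
    rw [Real.norm_of_nonneg (hg _).le, Real.norm_of_nonneg (hg _).le]
    simp only [g]
    rw [ascPochhammer_succ_eval, show 2 * (m + 1) = 2 * m + 1 + 1 by ring, Nat.factorial_succ,
      Nat.factorial_succ (2 * m)]
    push_cast
    field_simp
    ring
  refine summable_of_ratio_test_tendsto_lt_one hz1 (Eventually.of_forall fun m => (hg m).ne') ?_
  simp_rw [hratio]
  have hlim := ((((tendsto_add_mul_div_add_mul_atTop_nhds (2 : ℝ) 1 1 one_ne_zero).mul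
    (tendsto_add_mul_div_add_mul_atTop_nhds (3 : ℝ) 1 2 two_ne_zero)).mul
    (tendsto_add_mul_div_add_mul_atTop_nhds a 1 1 two_ne_zero)).mul
    (tendsto_add_mul_div_add_mul_atTop_nhds (4 * a) 2 4 two_ne_zero)).const_mul z
  convert hlim using 2
  norm_num

section Antidiagonal

variable {A : Type*} [AddCommMonoid A] [HasAntidiagonal A]

theorem HasSum.sum_antidiagonal {α : Type*} [AddCommMonoid α] [TopologicalSpace α]
    [ContinuousAdd α] [RegularSpace α] {f : A × A → α} {a : α} (hf : HasSum f a) :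
    HasSum (fun n => ∑ p ∈ antidiagonal n, f p) a := by
  rw [← HasAntidiagonal.sigmaAntidiagonalEquivProd.hasSum_iff] at hf
  exact hf.sigma fun n => (antidiagonal n).hasSum f

theorem summable_of_summable_sum_antidiagonal {f : A × A → ℝ} (hf : 0 ≤ f)
    (h : Summable fun n => ∑ p ∈ antidiagonal n, f p) : Summable f := by
  rw [← HasAntidiagonal.sigmaAntidiagonalEquivProd.summable_iff]
  exact (summable_sigma_of_nonneg fun _ => hf _).2 ⟨fun n => (antidiagonal n).summable f,
    h.congr fun n => (Finset.tsum_subtype (antidiagonal n) f).symm⟩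

end Antidiagonal

section MFT

variable {Δ z : ℝ}

noncomputable def mftCoeff (Δ : ℝ) (ℓ : ℕ) : ℝ :=
  (-1 : ℝ) ^ ℓ * ((ascPochhammer ℝ ℓ).eval Δ ^ 2 /
    (ℓ.factorial * (ascPochhammer ℝ ℓ).eval (ℓ + 2 * Δ - 1)))

noncomputable def mftDoubleTerm (Δ z : ℝ) (p : ℕ × ℕ) : ℝ :=
  mftCoeff Δ p.1 * (z ^ (Δ + p.1) *
    ((ascPochhammer ℝ p.2).eval (Δ + p.1) * (ascPochhammer ℝ p.2).eval (Δ + p.1) /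
      (ascPochhammer ℝ p.2).eval (2 * (Δ + p.1)) * z ^ p.2 / p.2.factorial))

theorem tsum_mftDoubleTerm_fiber (ℓ : ℕ) :
    ∑' n, mftDoubleTerm Δ z (ℓ, n) = mftCoeff Δ ℓ * sl2Block (Δ + ℓ) z := by
  simp only [mftDoubleTerm, tsum_mul_left]
  rfl

theorem mftDoubleTerm_of_mem_antidiagonal (hz : 0 < z) {m : ℕ} {p : ℕ × ℕ}
    (hp : p ∈ antidiagonal m) :
    mftDoubleTerm Δ z p =
      (ascPochhammer ℝ m).eval Δ ^ 2 * z ^ Δ * z ^ m * blockCoeff (2 * Δ) p.1 p.2 := by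
  obtain ⟨ℓ, n⟩ := p
  rw [HasAntidiagonal.mem_antidiagonal] at hp
  subst hp
  rw [mftDoubleTerm, mftCoeff, blockCoeff, ascPochhammer_eval_add, Real.rpow_add hz,
    Real.rpow_natCast, pow_add, show (ℓ : ℝ) + 2 * Δ - 1 = 2 * Δ + ℓ - 1 by ring,
    show 2 * (Δ + ℓ) = 2 * Δ + 2 * ℓ by ring]
  ring

theorem sum_antidiagonal_mftDoubleTerm (hΔ : 0 < Δ) (hz : 0 < z) (m : ℕ) :
    ∑ p ∈ antidiagonal m, mftDoubleTerm Δ z p = if m = 0 then z ^ Δ else 0 := by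
  rw [sum_congr rfl fun p hp => mftDoubleTerm_of_mem_antidiagonal hz hp, ← mul_sum,
    sum_antidiagonal_blockCoeff (by positivity)]
  split_ifs with hm <;> simp [hm]

theorem summable_mftDoubleTerm (hΔ : 0 < Δ) (hz0 : 0 < z) (hz1 : z < 1) :
    Summable (mftDoubleTerm Δ z) := by
  refine .of_abs (summable_of_summable_sum_antidiagonal (fun _ => abs_nonneg _) ?_)
  refine .of_nonneg_of_le (fun m => sum_nonneg fun _ _ => abs_nonneg _) (fun m => ?_)
    ((summable_ascPochhammer_sq_mul_four_pow_div_factorial hΔ hz0 hz1).mul_left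
      (4 * z ^ Δ / min (2 * Δ) 1 ^ 2))
  calc ∑ p ∈ antidiagonal m, |mftDoubleTerm Δ z p|
      = (ascPochhammer ℝ m).eval Δ ^ 2 * z ^ Δ * z ^ m *
          ∑ p ∈ antidiagonal m, |blockCoeff (2 * Δ) p.1 p.2| := by
        rw [mul_sum]
        refine sum_congr rfl fun p hp => ?_
        rw [mftDoubleTerm_of_mem_antidiagonal hz0 hp, abs_mul, abs_of_nonneg (by positivity)]
    _ ≤ (ascPochhammer ℝ m).eval Δ ^ 2 * z ^ Δ * z ^ m *
          (4 * (m + 1) * (2 * m + 1) / min (2 * Δ) 1 ^ 2 * (4 ^ m / (2 * m)!)) := by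
        gcongr
        exact sum_antidiagonal_abs_blockCoeff_le (by positivity) m
    _ = _ := by ring

theorem hasSum_mftDoubleTerm (hΔ : 0 < Δ) (hz0 : 0 < z) (hz1 : z < 1) :
    HasSum (mftDoubleTerm Δ z) (z ^ Δ) := by
  have hf := (summable_mftDoubleTerm hΔ hz0 hz1).hasSum
  have hdiag := hf.sum_antidiagonal
  simp_rw [sum_antidiagonal_mftDoubleTerm hΔ hz0] at hdiag
  rwa [← (hasSum_ite_eq 0 (z ^ Δ)).unique hdiag] at hf

end MFT

/-- Alternating 1d MFT identity. -/
theorem mft_alternating_sum (Δ : ℝ) (hΔ : 0 < Δ) (z : ℝ) (hz : z ∈ Set.Ioo (0:ℝ) 1) :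
    HasSum (fun ℓ : ℕ =>
        (-1 : ℝ) ^ ℓ * ((ascPochhammer ℝ ℓ).eval Δ ^ 2 /
          (ℓ.factorial * (ascPochhammer ℝ ℓ).eval (ℓ + 2 * Δ - 1))) * sl2Block (Δ + ℓ) z)
      (z ^ Δ) := by
  obtain ⟨hz0, hz1⟩ := hz
  have hf := hasSum_mftDoubleTerm hΔ hz0 hz1
  refine hf.prod_fiberwise fun ℓ => ?_
  have hfiber := (hf.summable.prod_factor ℓ).hasSum
  rwa [tsum_mftDoubleTerm_fiber] at hfiber
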